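/- arXiv:2511.01640 — 7 statements merged into one kernel-verified Lean document; each statement's English description precedes it below -/
import Mathlib

section
/- Let n : ℕ and let V : ℝⁿ → ℝⁿ be a C² vector field. Then for every point p ∈ ℝⁿ and every vector Y ∈ ℝⁿ, the second Lie derivative of the flat metric satisfies the identity ⟨B(p) Y, Y⟩ = 2 ⟨(fderiv ℝ (∇_V V) p) Y, Y⟩ + 2 ‖DV(p) Y‖². (This is the flat-space, diagonal (X = Y) form of the paper's curvature identity (e6), where the Riemann curvature term vanishes.) -/
open scoped RealInnerProductSpace

noncomputable section

/-- Euclidean space `ℝⁿ`. -/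
abbrev E (n : ℕ) := EuclideanSpace ℝ (Fin n)

/-- The field of symmetric operators representing the Lie derivative `L_V g` of the flat
metric: `A(p) = DV(p) + DV(p)*`. -/
def LieDerivOp {n : ℕ} (V : E n → E n) (p : E n) : E n →L[ℝ] E n :=
  fderiv ℝ V p + ContinuousLinearMap.adjoint (fderiv ℝ V p)

/-- The field of operators representing the second Lie derivative `L_V L_V g`:
`B(p) = (D_{V(p)} A) + A(p) ∘ DV(p) + DV(p)* ∘ A(p)`. -/
def LieDeriv2Op {n : ℕ} (V : E n → E n) (p : E n) : E n →L[ℝ] E n :=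
  fderiv ℝ (LieDerivOp V) p (V p)
    + (LieDerivOp V p).comp (fderiv ℝ V p)
    + (ContinuousLinearMap.adjoint (fderiv ℝ V p)).comp (LieDerivOp V p)

/-! Expanding `⟪B(p) Y, Y⟫` with the adjoint identities gives
`2 ⟪D²V(p)(V p) Y, Y⟫ + 2 ⟪DV(p) (DV(p) Y), Y⟫ + 2 ‖DV(p) Y‖²`, while the product rule gives
`D(∇_V V)(p) Y = D²V(p) Y (V p) + DV(p) (DV(p) Y)`. The two agree because the second derivative
of a `C²` field is symmetric. -/

open ContinuousLinearMap InnerProduct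

section Adjoint

variable {H : Type*} [NormedAddCommGroup H] [InnerProductSpace ℝ H] [CompleteSpace H]

theorem fderiv_adjoint_apply {X K : Type*} [NormedAddCommGroup X] [NormedSpace ℝ X]
    [NormedAddCommGroup K] [InnerProductSpace ℝ K] [CompleteSpace K]
    (f : X → H →L[ℝ] K) (p w : X) :
    fderiv ℝ (fun q => (f q)†) p w = (fderiv ℝ f p w)† :=
  -- over `ℝ` the adjoint is a linear isometry equivalence
  congr($((adjoint : (H →L[ℝ] K) ≃ₗᵢ[ℝ] (K →L[ℝ] H)).comp_fderiv (f := f) (x := p)) w)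

theorem inner_add_adjoint_add_comp_apply_self (S T : H →L[ℝ] H) (Y : H) :
    ⟪(S + S† + (T + T†) ∘L T + T† ∘L (T + T†)) Y, Y⟫ =
      2 * ⟪S Y, Y⟫ + 2 * ⟪T (T Y), Y⟫ + 2 * ‖T Y‖ ^ 2 := by
  simp only [add_apply, comp_apply, inner_add_left, adjoint_inner_left,
    real_inner_self_eq_norm_sq]
  rw [real_inner_comm Y (S Y), real_inner_comm Y (T (T Y))]
  ring

end Adjoint

theorem fderiv_lieDerivOp_apply {n : ℕ} {V : E n → E n} {p : E n}
    (hD : DifferentiableAt ℝ (fderiv ℝ V) p) (w : E n) :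
    fderiv ℝ (LieDerivOp V) p w = fderiv ℝ (fderiv ℝ V) p w + (fderiv ℝ (fderiv ℝ V) p w)† := by
  have hD_adjoint : DifferentiableAt ℝ (fun q => (fderiv ℝ V q)†) p :=
    (adjoint : (E n →L[ℝ] E n) ≃ₗᵢ[ℝ] (E n →L[ℝ] E n)).differentiableAt.comp p hD
  change fderiv ℝ (fun q => fderiv ℝ V q + (fderiv ℝ V q)†) p w = _
  rw [fderiv_fun_add hD hD_adjoint, add_apply, fderiv_adjoint_apply]

theorem inner_lieDeriv2Op_apply_self {n : ℕ} {V : E n → E n} {p : E n}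
    (hD : DifferentiableAt ℝ (fderiv ℝ V) p) (Y : E n) :
    ⟪LieDeriv2Op V p Y, Y⟫ =
      2 * ⟪fderiv ℝ (fderiv ℝ V) p (V p) Y, Y⟫ + 2 * ⟪fderiv ℝ V p (fderiv ℝ V p Y), Y⟫
        + 2 * ‖fderiv ℝ V p Y‖ ^ 2 := by
  rw [LieDeriv2Op, fderiv_lieDerivOp_apply hD]
  exact inner_add_adjoint_add_comp_apply_self _ _ Y

/-- the flat-space, diagonal form of the curvature identity (e6):
`⟨B(p) Y, Y⟩ = 2 ⟨(fderiv (∇_V V) p) Y, Y⟩ + 2 ‖DV(p) Y‖²`. -/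
theorem lieDeriv2_inner_eq {n : ℕ} (V : E n → E n) (hV : ContDiff ℝ 2 V)
    (p Y : E n) :
    ⟪LieDeriv2Op V p Y, Y⟫ =
      2 * ⟪fderiv ℝ (fun q => fderiv ℝ V q (V q)) p Y, Y⟫
        + 2 * ‖fderiv ℝ V p Y‖ ^ 2 := by
  have hD : DifferentiableAt ℝ (fderiv ℝ V) p :=
    (hV.fderiv_right le_rfl).differentiable one_ne_zero p
  have hsymm := ((hV.contDiffAt (x := p)).isSymmSndFDerivAt (by simp)).eq (V p) Y
  rw [inner_lieDeriv2Op_apply_self hD, fderiv_clm_apply hD (hV.differentiable two_ne_zero p),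
    add_apply, flip_apply, comp_apply, inner_add_left, hsymm]
  ring
end
end

section
/- Let n : ℕ, let V : ℝⁿ → ℝⁿ be a C² vector field and f : ℝⁿ → ℝ a function. Then V is mixed Killing with mixed Killing factor f (i.e. B(p) = f(p) • A(p) for all p) if and only if for every point p ∈ ℝⁿ and every vector Y ∈ ℝⁿ one has ⟨(fderiv ℝ (∇_V V) p) Y, Y⟩ + ‖DV(p) Y‖² = f(p) ⟨DV(p) Y, Y⟩. (This is the flat-space form of the paper's necessary and sufficient condition (e8), in which the curvature term g(R(Y,V)V,Y) vanishes.) -/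
open scoped RealInnerProductSpace

noncomputable section

/-- `V` is a mixed Killing vector field with mixed Killing factor `f` if
`B(p) = f(p) • A(p)` for all `p`. -/
def IsMixedKilling {n : ℕ} (V : E n → E n) (f : E n → ℝ) : Prop :=
  ∀ p, LieDeriv2Op V p = f p • LieDerivOp V p

/-!
Both `A(p)` and `B(p)` are self-adjoint, so `B(p) = f(p) • A(p)` is equivalent to the equality
of their quadratic forms. Clearly `⟪A Y, Y⟫ = 2 ⟪DV Y, Y⟫`. Writing `H` for the derivative of `DV`
in the direction `V(p)`, one has `B = (H + H*) + (A ∘ DV + (A ∘ DV)*)`, whence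
`⟪B Y, Y⟫ = 2 (⟪H Y + DV (DV Y), Y⟫ + ‖DV Y‖²)`; by the symmetry of the second derivative of `V`,
`H Y + DV (DV Y)` is the derivative of `∇_V V` in the direction `Y`.
-/

open ContinuousLinearMap

section RealAdjoint

variable {X H K : Type*} [NormedAddCommGroup X] [NormedSpace ℝ X]
  [NormedAddCommGroup H] [InnerProductSpace ℝ H] [CompleteSpace H]
  [NormedAddCommGroup K] [InnerProductSpace ℝ K] [CompleteSpace K]

/-- Over `ℝ`, `starRingEnd` is the identity, so the adjoint is a continuous linear map. -/
def adjointCLM : (H →L[ℝ] K) →L[ℝ] (K →L[ℝ] H) :=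
  (adjoint : (H →L[ℝ] K) ≃ₗᵢ⋆[ℝ] (K →L[ℝ] H)).toContinuousLinearEquiv.toContinuousLinearMap

lemma HasFDerivAt.adjoint {F : X → H →L[ℝ] K} {F' : X →L[ℝ] H →L[ℝ] K} {x : X}
    (hF : HasFDerivAt F F' x) :
    HasFDerivAt (fun y => ContinuousLinearMap.adjoint (F y)) (adjointCLM.comp F') x :=
  (adjointCLM (H := H) (K := K)).hasFDerivAt.comp x hF

lemma fderiv_add_adjoint_apply {F : X → H →L[ℝ] H} {x : X} (hF : DifferentiableAt ℝ F x)
    (v : X) :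
    fderiv ℝ (fun y => F y + ContinuousLinearMap.adjoint (F y)) x v =
      fderiv ℝ F x v + ContinuousLinearMap.adjoint (fderiv ℝ F x v) := by
  rw [(hF.hasFDerivAt.fun_add hF.hasFDerivAt.adjoint).fderiv]
  rfl

lemma inner_add_adjoint_apply_self (T : H →L[ℝ] H) (x : H) :
    ⟪(T + ContinuousLinearMap.adjoint T) x, x⟫ = 2 * ⟪T x, x⟫ := by
  rw [add_apply, inner_add_left, adjoint_inner_left, real_inner_comm x]
  ring

lemma IsSelfAdjoint.eq_iff_inner_map_self {T S : H →L[ℝ] H} (hT : IsSelfAdjoint T)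
    (hS : IsSelfAdjoint S) : T = S ↔ ∀ x, ⟪T x, x⟫ = ⟪S x, x⟫ := by
  rw [← sub_eq_zero, ← coe_inj, toLinearMap_zero,
    ← (hT.sub hS).isSymmetric.inner_map_self_eq_zero]
  simp [inner_sub_left, sub_eq_zero]

end RealAdjoint

lemma fderiv_fderiv_apply_self_apply {X : Type*} [NormedAddCommGroup X] [NormedSpace ℝ X]
    {V : X → X} (hV : ContDiff ℝ 2 V) (p Y : X) :
    fderiv ℝ (fun q => fderiv ℝ V q (V q)) p Y =
      fderiv ℝ (fderiv ℝ V) p (V p) Y + fderiv ℝ V p (fderiv ℝ V p Y) := by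
  have hD : DifferentiableAt ℝ (fderiv ℝ V) p :=
    (hV.fderiv_right le_rfl).differentiable one_ne_zero p
  have hsymm : IsSymmSndFDerivAt ℝ V p :=
    hV.contDiffAt.isSymmSndFDerivAt (by simp [minSmoothness_of_isRCLikeNormedField])
  rw [fderiv_clm_apply hD (hV.differentiable two_ne_zero p), add_apply, flip_apply,
    hsymm, comp_apply, add_comm]

section LieDerivative

variable {n : ℕ} (V : E n → E n)

lemma isSelfAdjoint_lieDerivOp (p : E n) : IsSelfAdjoint (LieDerivOp V p) := by
  simpa only [LieDerivOp, star_eq_adjoint] using IsSelfAdjoint.add_star_self (fderiv ℝ V p)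

lemma inner_lieDerivOp_self (p Y : E n) :
    ⟪LieDerivOp V p Y, Y⟫ = 2 * ⟪fderiv ℝ V p Y, Y⟫ :=
  inner_add_adjoint_apply_self _ Y

variable {V} {p : E n}

lemma lieDeriv2Op_eq (hV : DifferentiableAt ℝ (fderiv ℝ V) p) :
    LieDeriv2Op V p =
      (fderiv ℝ (fderiv ℝ V) p (V p) + adjoint (fderiv ℝ (fderiv ℝ V) p (V p)))
        + ((LieDerivOp V p).comp (fderiv ℝ V p)
          + adjoint ((LieDerivOp V p).comp (fderiv ℝ V p))) := by
  rw [LieDeriv2Op, show fderiv ℝ (LieDerivOp V) p (V p) = _ from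
    fderiv_add_adjoint_apply hV (V p), adjoint_comp,
    ← star_eq_adjoint (LieDerivOp V p), isSelfAdjoint_lieDerivOp V p, LieDerivOp, add_assoc]

lemma isSelfAdjoint_lieDeriv2Op (hV : DifferentiableAt ℝ (fderiv ℝ V) p) :
    IsSelfAdjoint (LieDeriv2Op V p) := by
  rw [lieDeriv2Op_eq hV]
  exact (star_eq_adjoint (fderiv ℝ (fderiv ℝ V) p (V p)) ▸ IsSelfAdjoint.add_star_self _).add
    (star_eq_adjoint ((LieDerivOp V p).comp (fderiv ℝ V p)) ▸ IsSelfAdjoint.add_star_self _)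

lemma inner_lieDeriv2Op_self (hV : DifferentiableAt ℝ (fderiv ℝ V) p) (Y : E n) :
    ⟪LieDeriv2Op V p Y, Y⟫ =
      2 * (⟪fderiv ℝ (fderiv ℝ V) p (V p) Y + fderiv ℝ V p (fderiv ℝ V p Y), Y⟫
        + ‖fderiv ℝ V p Y‖ ^ 2) := by
  rw [lieDeriv2Op_eq hV, add_apply, inner_add_left, inner_add_adjoint_apply_self,
    inner_add_adjoint_apply_self, comp_apply, LieDerivOp, add_apply, inner_add_left,
    adjoint_inner_left, inner_add_left, real_inner_self_eq_norm_sq]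
  ring

end LieDerivative

/-- the flat-space form of the necessary and sufficient condition (e8):
`V` is mixed Killing with factor `f` iff
`⟨(fderiv (∇_V V) p) Y, Y⟩ + ‖DV(p) Y‖² = f(p) ⟨DV(p) Y, Y⟩` for all `p, Y`. -/
theorem isMixedKilling_iff {n : ℕ} (V : E n → E n) (hV : ContDiff ℝ 2 V)
    (f : E n → ℝ) :
    IsMixedKilling V f ↔
      ∀ (p Y : E n),
        ⟪fderiv ℝ (fun q => fderiv ℝ V q (V q)) p Y, Y⟫ + ‖fderiv ℝ V p Y‖ ^ 2 =
          f p * ⟪fderiv ℝ V p Y, Y⟫ := by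
  have hD : Differentiable ℝ (fderiv ℝ V) :=
    (hV.fderiv_right le_rfl).differentiable one_ne_zero
  refine forall_congr' fun p => ?_
  rw [(isSelfAdjoint_lieDeriv2Op (hD p)).eq_iff_inner_map_self
    ((IsSelfAdjoint.all (f p)).smul (isSelfAdjoint_lieDerivOp V p))]
  refine forall_congr' fun Y => ?_
  rw [inner_lieDeriv2Op_self (hD p), smul_apply, real_inner_smul_left, inner_lieDerivOp_self,
    fderiv_fderiv_apply_self_apply hV]
  constructor <;> intro h <;> linarith
end
end

section
/- Let n : ℕ, let V : ℝⁿ → ℝⁿ be a C² vector field which is mixed Killing for the flat metric g with mixed Killing factor f : ℝⁿ → ℝ, and let ρ : ℝⁿ → ℝ be a smooth positive function. Then V is mixed Killing for the conformally changed metric g_ρ = ρ g with the same factor f (i.e. B_ρ(p) = f(p) • A_ρ(p) for all p) if and only if for every p ∈ ℝⁿ: 2 (Vρ)(p) • A(p) = (f(p) (Vρ)(p) − (V(Vρ))(p)) • Id. (This is the flat-space form of the paper's theorem on invariance of mixed Killing fields under conformal change of the metric.) -/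
open scoped RealInnerProductSpace

noncomputable section

/-- The operator representing the Lie derivative `L_V g_ρ` of the conformally changed
metric `g_ρ = ρ g`: `A_ρ(p) = ρ(p) • A(p) + (Vρ)(p) • Id`. -/
def LieDerivOpConf {n : ℕ} (V : E n → E n) (ρ : E n → ℝ) (p : E n) : E n →L[ℝ] E n :=
  ρ p • LieDerivOp V p + (fderiv ℝ ρ p (V p)) • (ContinuousLinearMap.id ℝ (E n))

/-- The operator representing the second Lie derivative `L_V L_V g_ρ`:
`B_ρ(p) = (D_{V(p)} A_ρ) + A_ρ(p) ∘ DV(p) + DV(p)* ∘ A_ρ(p)`. -/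
def LieDeriv2OpConf {n : ℕ} (V : E n → E n) (ρ : E n → ℝ) (p : E n) : E n →L[ℝ] E n :=
  fderiv ℝ (LieDerivOpConf V ρ) p (V p)
    + (LieDerivOpConf V ρ p).comp (fderiv ℝ V p)
    + (ContinuousLinearMap.adjoint (fderiv ℝ V p)).comp (LieDerivOpConf V ρ p)

set_option maxHeartbeats 1000000 in
/-- The adjoint, as a continuous linear map on operators. -/
def adjCLM (n : ℕ) : (E n →L[ℝ] E n) →L[ℝ] (E n →L[ℝ] E n) :=
  { toFun := ContinuousLinearMap.adjoint,
    map_add' := fun x y => map_add _ x y,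
    map_smul' := fun r x => by simp [map_smulₛₗ],
    cont := (ContinuousLinearMap.adjoint (E := E n) (F := E n)).continuous }

set_option maxHeartbeats 1000000 in
/-- a mixed Killing field `V` (factor `f`) for the flat metric is mixed
Killing with the same factor for the conformal metric `g_ρ = ρ g` iff
`2 (Vρ)(p) • A(p) = (f(p)(Vρ)(p) − V(Vρ)(p)) • Id` for every `p`. -/
theorem isMixedKilling_conformal_iff {n : ℕ} (V : E n → E n) (hV : ContDiff ℝ 2 V)
    (f : E n → ℝ) (hmk : IsMixedKilling V f)
    (ρ : E n → ℝ) (hρ : ContDiff ℝ (⊤ : ℕ∞) ρ) (hρpos : ∀ p, 0 < ρ p) :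
    (∀ p, LieDeriv2OpConf V ρ p = f p • LieDerivOpConf V ρ p) ↔
      ∀ p, (2 * fderiv ℝ ρ p (V p)) • LieDerivOp V p =
        (f p * fderiv ℝ ρ p (V p)
            - fderiv ℝ (fun q => fderiv ℝ ρ q (V q)) p (V p)) •
          (ContinuousLinearMap.id ℝ (E n)) := by
  have hDV : Differentiable ℝ (fderiv ℝ V) :=
    (hV.fderiv_right (m := 1) (by norm_num)).differentiable one_ne_zero
  have hA : Differentiable ℝ (LieDerivOp V) :=
    hDV.add (((adjCLM n).differentiable).comp hDV)
  have hρd : Differentiable ℝ ρ := hρ.differentiable (by simp)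
  have hVd : Differentiable ℝ V := hV.differentiable two_ne_zero
  have hfρ : Differentiable ℝ (fderiv ℝ ρ) :=
    (hρ.fderiv_right (m := 1) (by exact WithTop.coe_le_coe.mpr le_top)).differentiable one_ne_zero
  have hVρ : Differentiable ℝ (fun q => fderiv ℝ ρ q (V q)) :=
    hfρ.clm_apply hVd
  -- key computation of B_ρ
  have key : ∀ p, LieDeriv2OpConf V ρ p =
      (ρ p * f p) • LieDerivOp V p
        + (2 * fderiv ℝ ρ p (V p)) • LieDerivOp V p
        + (fderiv ℝ (fun q => fderiv ℝ ρ q (V q)) p (V p)) •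
            ContinuousLinearMap.id ℝ (E n) := by
    intro p
    have h1 : fderiv ℝ (fun q => ρ q • LieDerivOp V q) p
        = ρ p • fderiv ℝ (LieDerivOp V) p
          + (fderiv ℝ ρ p).smulRight (LieDerivOp V p) :=
      fderiv_smul (hρd p) (hA p)
    have h2 : fderiv ℝ (fun q => (fderiv ℝ ρ q (V q)) • ContinuousLinearMap.id ℝ (E n)) p
        = (fderiv ℝ (fun q => fderiv ℝ ρ q (V q)) p).smulRight
            (ContinuousLinearMap.id ℝ (E n)) :=
      fderiv_smul_const (hVρ p) (ContinuousLinearMap.id ℝ (E n))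
    have hD : fderiv ℝ (LieDerivOpConf V ρ) p
        = ρ p • fderiv ℝ (LieDerivOp V) p
          + (fderiv ℝ ρ p).smulRight (LieDerivOp V p)
          + (fderiv ℝ (fun q => fderiv ℝ ρ q (V q)) p).smulRight
              (ContinuousLinearMap.id ℝ (E n)) := by
      have : LieDerivOpConf V ρ = fun q =>
          (fun q => ρ q • LieDerivOp V q) q
            + (fun q => (fderiv ℝ ρ q (V q)) • ContinuousLinearMap.id ℝ (E n)) q := rfl
      rw [this, fderiv_fun_add (show DifferentiableAt ℝ (fun q => ρ q • LieDerivOp V q) p from (hρd p).smul (hA p)) ((hVρ p).smul_const _), h1, h2]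
    have hmkp := hmk p
    rw [LieDeriv2Op] at hmkp
    -- abbreviations
    set Dp := fderiv ℝ V p with hDp
    set Ap := LieDerivOp V p with hAp
    set A' := fderiv ℝ (LieDerivOp V) p (V p) with hA'
    set r := ρ p with hr
    set r' := fderiv ℝ ρ p (V p) with hr'
    set r'' := fderiv ℝ (fun q => fderiv ℝ ρ q (V q)) p (V p) with hr''
    have hsum : Dp + ContinuousLinearMap.adjoint Dp = Ap := rfl
    have hBρ : LieDeriv2OpConf V ρ p
        = (r' • Ap + r • A' + r'' • ContinuousLinearMap.id ℝ (E n))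
          + (r • Ap.comp Dp + r' • Dp)
          + (r • (ContinuousLinearMap.adjoint Dp).comp Ap
              + r' • ContinuousLinearMap.adjoint Dp) := by
      rw [LieDeriv2OpConf, hD]
      simp only [LieDerivOpConf, ContinuousLinearMap.add_apply,
        ContinuousLinearMap.smul_apply, ContinuousLinearMap.smulRight_apply,
        ContinuousLinearMap.add_comp, ContinuousLinearMap.smul_comp,
        ContinuousLinearMap.comp_add, ContinuousLinearMap.comp_smul,
        ContinuousLinearMap.id_comp, ContinuousLinearMap.comp_id]
      module
    rw [hBρ]
    have : A' = f p • Ap - Ap.comp Dp - (ContinuousLinearMap.adjoint Dp).comp Ap := by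
      rw [eq_sub_iff_add_eq, eq_sub_iff_add_eq]
      linear_combination (norm := module) hmkp
    rw [this, ← hsum]
    module
  constructor
  · intro h p
    have hp := h p
    rw [key p, LieDerivOpConf] at hp
    linear_combination (norm := module) hp
  · intro h p
    have hp := h p
    rw [key p, LieDerivOpConf]
    linear_combination (norm := module) hp
end
end

section
/- Let n : ℕ, let V : ℝⁿ → ℝⁿ be a C² vector field which is conformal with smooth conformal factor λ : ℝⁿ → ℝ, i.e. A(p) = 2 λ(p) • Id for all p. Then V satisfies B(p) = 2 λ(p) • A(p) for all p (i.e. V is mixed Killing with factor f = 2λ) if and only if (Vλ)(p) := fderiv ℝ λ p (V(p)) = 0 for all p, i.e. λ is constant along the flow of V. (This is the flat-space form of the paper's claim that a conformal vector field with conformal factor λ is mixed Killing with f = 2λ precisely when λ is constant along the flow of V; in particular, homothetic vector fields, where λ is a nonzero constant, are mixed Killing.) -/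
open scoped RealInnerProductSpace

noncomputable section

/-- a conformal vector field `V` with smooth conformal factor `lam`
(`A(p) = 2 lam(p) • Id`) is mixed Killing with factor `f = 2 lam` iff `lam` is constant
along the flow of `V`, i.e. `(V lam)(p) = 0` for all `p`. -/
theorem conformal_isMixedKilling_iff {n : ℕ} (V : E n → E n) (hV : ContDiff ℝ 2 V)
    (lam : E n → ℝ) (hlam : ContDiff ℝ (⊤ : ℕ∞) lam)
    (hconf : ∀ p, LieDerivOp V p = (2 * lam p) • (ContinuousLinearMap.id ℝ (E n))) :
    IsMixedKilling V (fun p => 2 * lam p) ↔ ∀ p, fderiv ℝ lam p (V p) = 0 := by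
  classical
  have hlamd : ∀ p, DifferentiableAt ℝ lam p :=
    fun p => (hlam.differentiable (by simp)).differentiableAt
  have hA : LieDerivOp V = fun q => (2 * lam q) • (ContinuousLinearMap.id ℝ (E n)) :=
    funext hconf
  have hkey : ∀ p, LieDeriv2Op V p =
      (2 * lam p) • LieDerivOp V p
        + (2 * fderiv ℝ lam p (V p)) • (ContinuousLinearMap.id ℝ (E n)) := by
    intro p
    have hderiv : fderiv ℝ (LieDerivOp V) p =
        (fderiv ℝ (fun q => 2 * lam q) p).smulRight (ContinuousLinearMap.id ℝ (E n)) := by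
      rw [hA]
      exact fderiv_smul_const ((hlamd p).const_mul 2) (ContinuousLinearMap.id ℝ (E n))
    have h2 : fderiv ℝ (fun q => 2 * lam q) p = (2 : ℝ) • fderiv ℝ lam p :=
      fderiv_const_mul (hlamd p) 2
    have h1 : fderiv ℝ (LieDerivOp V) p (V p) =
        (2 * fderiv ℝ lam p (V p)) • (ContinuousLinearMap.id ℝ (E n)) := by
      rw [hderiv, ContinuousLinearMap.smulRight_apply, h2]
      simp [smul_smul]
    have hc1 : (LieDerivOp V p).comp (fderiv ℝ V p) = (2 * lam p) • fderiv ℝ V p := by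
      rw [hconf p, ContinuousLinearMap.smul_comp, ContinuousLinearMap.id_comp]
    have hc2 : (ContinuousLinearMap.adjoint (fderiv ℝ V p)).comp (LieDerivOp V p)
        = (2 * lam p) • ContinuousLinearMap.adjoint (fderiv ℝ V p) := by
      rw [hconf p, ContinuousLinearMap.comp_smul, ContinuousLinearMap.comp_id]
    rw [LieDeriv2Op, h1, hc1, hc2, LieDerivOp, smul_add]
    abel
  constructor
  · intro h p
    have hp := hkey p
    rw [h p] at hp
    have h0 : (2 * fderiv ℝ lam p (V p)) • (ContinuousLinearMap.id ℝ (E n)) = 0 := by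
      have := left_eq_add.mp hp
      simpa using this
    rcases Nat.eq_zero_or_pos n with hn | hn
    · subst hn
      rw [Subsingleton.elim (V p) 0, map_zero]
    · have e0 : (EuclideanSpace.single (⟨0, hn⟩ : Fin n) (1 : ℝ) : E n) ≠ 0 := by
        intro he
        have := congrFun (congrArg (fun x : E n => (x : Fin n → ℝ)) he) ⟨0, hn⟩
        simp at this
      have := congrArg (fun T : E n →L[ℝ] E n =>
        T (EuclideanSpace.single (⟨0, hn⟩ : Fin n) (1 : ℝ))) h0
      simp only [ContinuousLinearMap.smul_apply, ContinuousLinearMap.id_apply,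
        ContinuousLinearMap.zero_apply] at this
      rcases smul_eq_zero.mp this with h | h
      · linarith [h]
      · exact absurd h e0
  · intro h p
    rw [hkey p, h p, mul_zero, zero_smul ℝ (ContinuousLinearMap.id ℝ (E n)), add_zero]
end
end

section
/- Let ρ : ℝ → ℝ be C² and F : ℝ → ℝ continuous, and suppose ρ(t) ρ''(t) + ρ'(t)² = 2 F(t) ρ(t) ρ'(t) for all t ∈ ℝ. Then there exist constants c, c' ∈ ℝ such that ρ(t)² = c · ∫₀ᵗ exp(2 ∫₀ˢ F(u) du) ds + c' for all t ∈ ℝ. -/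
/-!
Writing `u = ρ²`, the equation says `u'' = 2 F u'`, a first-order linear equation for `u'`.
Hence `u' = c · exp (2 ∫₀ᵗ F)`, and integrating once more gives the formula for `u`.
-/

open Real

theorem eq_mul_exp_integral_of_hasDerivAt_mul {v g : ℝ → ℝ} (hg : Continuous g)
    (hv : ∀ t, HasDerivAt v (g t * v t) t) (a t : ℝ) :
    v t = v a * exp (∫ s in a..t, g s) := by
  set G : ℝ → ℝ := fun t => ∫ s in a..t, g s
  have hG : ∀ t, HasDerivAt G (g t) t := fun t => (hg.integral_hasStrictDerivAt a t).hasDerivAt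
  have hw : ∀ t, HasDerivAt (fun t => v t * exp (-G t)) 0 t := fun t => by
    refine ((hv t).mul (hG t).neg.exp).congr_deriv ?_
    simp only [Pi.neg_apply]
    ring
  have hconst : v t * exp (-G t) = v a * exp (-G a) :=
    is_const_of_deriv_eq_zero (fun x => (hw x).differentiableAt) (fun x => (hw x).deriv) t a
  have hGa : G a = 0 := intervalIntegral.integral_same
  rw [hGa, neg_zero, exp_zero, mul_one] at hconst
  rw [← hconst, mul_assoc, ← exp_add, neg_add_cancel, exp_zero, mul_one]

theorem hasDerivAt_mul_deriv_of_contDiff_two {ρ : ℝ → ℝ} (hρ : ContDiff ℝ 2 ρ) (t : ℝ) :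
    HasDerivAt (fun t => ρ t * deriv ρ t)
      (deriv ρ t ^ 2 + ρ t * deriv (deriv ρ) t) t := by
  have hρ' : ContDiff ℝ 1 (deriv ρ) := hρ.iterate_deriv' 1 1
  refine ((hρ.differentiable two_ne_zero t).hasDerivAt.mul
    (hρ'.differentiable one_ne_zero t).hasDerivAt).congr_deriv ?_
  ring

/-- if `ρ` is C², `F` is continuous and `ρ ρ'' + ρ'² = 2 F ρ ρ'` on ℝ,
then `ρ(t)² = c ∫₀ᵗ exp(2 ∫₀ˢ F(u) du) ds + c'` for some constants `c, c'`. -/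
theorem mixedKilling_ode_solution (ρ F : ℝ → ℝ) (hρ : ContDiff ℝ 2 ρ)
    (hF : Continuous F)
    (h : ∀ t, ρ t * deriv (deriv ρ) t + (deriv ρ t) ^ 2 = 2 * F t * (ρ t * deriv ρ t)) :
    ∃ c c' : ℝ, ∀ t,
      (ρ t) ^ 2 = c * (∫ s in (0 : ℝ)..t, exp (2 * ∫ u in (0 : ℝ)..s, F u)) + c' := by
  set v : ℝ → ℝ := fun t => 2 * (ρ t * deriv ρ t)
  have hv_deriv : ∀ t, HasDerivAt v (2 * F t * v t) t := fun t => by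
    refine ((hasDerivAt_mul_deriv_of_contDiff_two hρ t).const_mul 2).congr_deriv ?_
    linear_combination 2 * h t
  have hv_eq : ∀ t, v t = v 0 * exp (2 * ∫ u in (0 : ℝ)..t, F u) := fun t => by
    rw [eq_mul_exp_integral_of_hasDerivAt_mul (hF.const_mul 2) hv_deriv 0 t,
      intervalIntegral.integral_const_mul]
  have hsq : ∀ t, HasDerivAt (fun t => ρ t ^ 2) (v t) t := fun t => by
    refine ((hρ.differentiable two_ne_zero t).hasDerivAt.pow 2).congr_deriv ?_
    ring
  have hvc : Continuous v :=
    continuous_const.mul (hρ.continuous.mul (hρ.continuous_deriv one_le_two))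
  refine ⟨v 0, ρ 0 ^ 2, fun t => ?_⟩
  have hftc : ∫ s in (0 : ℝ)..t, v s = ρ t ^ 2 - ρ 0 ^ 2 :=
    intervalIntegral.integral_eq_sub_of_hasDerivAt (fun s _ => hsq s) (hvc.intervalIntegrable 0 t)
  have hint : ∫ s in (0 : ℝ)..t, v s =
      v 0 * ∫ s in (0 : ℝ)..t, exp (2 * ∫ u in (0 : ℝ)..s, F u) := by
    rw [← intervalIntegral.integral_const_mul]
    exact intervalIntegral.integral_congr fun s _ => hv_eq s
  linarith
end

section
/- Let r : ℝ → ℝ be C², let F : ℝ → ℝ be continuous, and let x : ℝ → ℝ be differentiable with x'(t) = r(x(t)) for all t ∈ ℝ. Assume r(s) r''(s) + 2 r'(s)² = 2 F(s) r'(s) for all s ∈ ℝ. Then there exist constants c, c' ∈ ℝ such that r(x(t))² = c · ∫₀ᵗ exp(2 ∫₀ˢ F(x(u)) du) ds + c' for all t ∈ ℝ. (This is the full solution formula of the paper's Remark 2 for a mixed Killing vector field r d/dx on the real line, evaluated along an integral curve.) -/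
/-!
Along an integral curve `x' = r(x)`, the function `y = r(x)²` has derivative `y' = 2 r(x)² r'(x)`,
and the equation `r r'' + 2 r'² = 2 F r'` says exactly that `q = r(x)² r'(x)` solves the linear
equation `q' = 2 F(x) q`. Hence `q = q(0) exp(2 ∫₀ᵗ F(x))`, and integrating `y' = 2 q` once more
gives the formula with `c = 2 q(0)` and `c' = y(0)`.
-/

open Real

theorem eq_mul_exp_integral_of_hasDerivAt {a w : ℝ → ℝ} (ha : Continuous a)
    (hw : ∀ t, HasDerivAt w (a t * w t) t) (t₀ t : ℝ) :
    w t = w t₀ * exp (∫ s in t₀..t, a s) := by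
  set A : ℝ → ℝ := fun t => ∫ s in t₀..t, a s
  have hA : ∀ t, HasDerivAt A (a t) t := fun t => (ha.integral_hasStrictDerivAt t₀ t).hasDerivAt
  have hconst : ∀ s, HasDerivAt (fun t => w t * exp (-A t)) 0 s := fun s => by
    refine ((hw s).fun_mul (hA s).fun_neg.exp).congr_deriv ?_
    ring
  have h := is_const_of_deriv_eq_zero (fun s => (hconst s).differentiableAt)
    (fun s => (hconst s).deriv) t t₀
  simp only [A, intervalIntegral.integral_same, neg_zero, exp_zero, mul_one] at h
  rw [← h, mul_assoc, ← exp_add, neg_add_cancel, exp_zero, mul_one]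

section IntegralCurve

variable {r x : ℝ → ℝ}

theorem hasDerivAt_comp_of_integralCurve {g : ℝ → ℝ} (hg : Differentiable ℝ g)
    (hx : ∀ t, HasDerivAt x (r (x t)) t) (t : ℝ) :
    HasDerivAt (fun t => g (x t)) (deriv g (x t) * r (x t)) t :=
  (hg (x t)).hasDerivAt.comp t (hx t)

theorem hasDerivAt_sq_comp_of_integralCurve (hr : Differentiable ℝ r)
    (hx : ∀ t, HasDerivAt x (r (x t)) t) (t : ℝ) :
    HasDerivAt (fun t => r (x t) ^ 2) (2 * (r (x t) ^ 2 * deriv r (x t))) t := by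
  refine ((hasDerivAt_comp_of_integralCurve hr hx t).fun_pow 2).congr_deriv ?_
  ring

theorem hasDerivAt_sq_mul_deriv_comp_of_integralCurve {F : ℝ → ℝ} (hr : ContDiff ℝ 2 r)
    (hx : ∀ t, HasDerivAt x (r (x t)) t)
    (hmk : ∀ s, r s * deriv (deriv r) s + 2 * (deriv r s) ^ 2 = 2 * F s * deriv r s) (t : ℝ) :
    HasDerivAt (fun t => r (x t) ^ 2 * deriv r (x t))
      (2 * F (x t) * (r (x t) ^ 2 * deriv r (x t))) t := by
  have hr₀ := hasDerivAt_comp_of_integralCurve (hr.differentiable two_ne_zero) hx t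
  have hr₁ := hasDerivAt_comp_of_integralCurve hr.differentiable_deriv_two hx t
  refine ((hr₀.fun_pow 2).fun_mul hr₁).congr_deriv ?_
  linear_combination (r (x t)) ^ 2 * hmk (x t)

end IntegralCurve

/-- the full solution formula of Remark 2: if `r` is C², `F` is continuous,
`x` is an integral curve of `r d/dx` and `r r'' + 2 r'² = 2 F r'` holds on ℝ, then
`r(x(t))² = c ∫₀ᵗ exp(2 ∫₀ˢ F(x(u)) du) ds + c'` for some constants `c, c'`. -/
theorem mixedKilling_solution_along_integral_curve (r F x : ℝ → ℝ)
    (hr : ContDiff ℝ 2 r) (hF : Continuous F)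
    (hx : Differentiable ℝ x) (hode : ∀ t, deriv x t = r (x t))
    (hmk : ∀ s, r s * deriv (deriv r) s + 2 * (deriv r s) ^ 2 = 2 * F s * deriv r s) :
    ∃ c c' : ℝ, ∀ t,
      (r (x t)) ^ 2 = c * (∫ s in (0 : ℝ)..t, exp (2 * ∫ u in (0 : ℝ)..s, F (x u))) + c' := by
  have hcurve : ∀ t, HasDerivAt x (r (x t)) t := fun t => hode t ▸ (hx t).hasDerivAt
  have hFx : Continuous fun u => F (x u) := hF.comp hx.continuous
  set q : ℝ → ℝ := fun t => r (x t) ^ 2 * deriv r (x t)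
  have hq : ∀ t, q t = q 0 * exp (2 * ∫ u in (0 : ℝ)..t, F (x u)) := fun t => by
    rw [← intervalIntegral.integral_const_mul]
    exact eq_mul_exp_integral_of_hasDerivAt (continuous_const.mul hFx)
      (hasDerivAt_sq_mul_deriv_comp_of_integralCurve hr hcurve hmk) 0 t
  have hexp : Continuous fun s => exp (2 * ∫ u in (0 : ℝ)..s, F (x u)) :=
    continuous_exp.comp (continuous_const.mul
      (intervalIntegral.continuous_primitive hFx.intervalIntegrable 0))
  have hy : ∀ s, HasDerivAt (fun t => r (x t) ^ 2)
      (2 * q 0 * exp (2 * ∫ u in (0 : ℝ)..s, F (x u))) s := fun s => by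
    rw [mul_assoc, ← hq s]
    exact hasDerivAt_sq_comp_of_integralCurve (hr.differentiable two_ne_zero) hcurve s
  refine ⟨2 * q 0, r (x 0) ^ 2, fun t => ?_⟩
  have hftc := intervalIntegral.integral_eq_sub_of_hasDerivAt (fun s _ => hy s)
    ((continuous_const.mul hexp).intervalIntegrable 0 t)
  rw [intervalIntegral.integral_const_mul] at hftc
  linarith
end

section
/- Let r : ℝ → ℝ be C², let f ∈ ℝ be a nonzero constant, and let x : ℝ → ℝ be differentiable with x'(t) = r(x(t)) for all t ∈ ℝ. Assume r(s) r''(s) + 2 r'(s)² = 2 f r'(s) for all s ∈ ℝ. Then there exist constants c, c' ∈ ℝ such that r(x(t))² = (c / f) · exp(2 f t) + c' for all t ∈ ℝ. (This is the constant-factor case of the paper's Remark 2 solution formula for a mixed Killing vector field r d/dx on the real line, evaluated along an integral curve.) -/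
/-!
Along the integral curve, `G t = r (x t) ^ 2` has `G' = 2 r² r' ∘ x`. Multiplying the
mixed Killing equation by `2 r²` gives `(2 r² r')' · r = 2 f · 2 r² r'`, i.e. `G'' = 2 f G'`
along the curve. Hence `G' = G'(0) e^{2ft}`, and integrating once more gives
`G = G'(0) / (2f) · e^{2ft} + const`.
-/

open Real

theorem eq_mul_exp_of_hasDerivAt {g : ℝ → ℝ} {a : ℝ} (hg : ∀ t, HasDerivAt g (a * g t) t)
    (t : ℝ) : g t = g 0 * exp (a * t) := by
  have hconst : ∀ s, HasDerivAt (fun s => g s * exp (-(a * s))) 0 s := fun s =>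
    ((hg s).mul ((hasDerivAt_id' s).const_mul a).neg.exp).congr_deriv (by ring)
  have := is_const_of_deriv_eq_zero (fun s => (hconst s).differentiableAt)
    (fun s => (hconst s).deriv) t 0
  calc g t = g t * exp (-(a * t)) * exp (a * t) := by rw [mul_assoc, ← exp_add]; simp
    _ = g 0 * exp (a * t) := by rw [this]; simp

theorem eq_div_mul_exp_add_of_hasDerivAt {G G' : ℝ → ℝ} {a : ℝ} (ha : a ≠ 0)
    (hG : ∀ t, HasDerivAt G (G' t) t) (hG' : ∀ t, HasDerivAt G' (a * G' t) t) (t : ℝ) :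
    G t = G' 0 / a * exp (a * t) + (G 0 - G' 0 / a) := by
  have hconst : ∀ s, HasDerivAt (fun s => G s - G' 0 / a * exp (a * s)) 0 s := fun s =>
    ((hG s).sub (((hasDerivAt_id' s).const_mul a).exp.const_mul (G' 0 / a))).congr_deriv (by
      rw [eq_mul_exp_of_hasDerivAt hG' s]
      field_simp
      ring)
  have := is_const_of_deriv_eq_zero (fun s => (hconst s).differentiableAt)
    (fun s => (hconst s).deriv) t 0
  simp only [mul_zero, exp_zero, mul_one] at this
  linarith

theorem hasDerivAt_sq_mul_deriv {r : ℝ → ℝ} (hr : ContDiff ℝ 2 r) (s : ℝ) :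
    HasDerivAt (fun s => r s ^ 2 * deriv r s)
      (2 * r s * deriv r s ^ 2 + r s ^ 2 * deriv (deriv r) s) s := by
  have hr' : Differentiable ℝ (deriv r) :=
    (hr.iterate_deriv' 1 1).differentiable one_ne_zero
  exact (((hr.differentiable two_ne_zero s).hasDerivAt.fun_pow 2).mul
    (hr' s).hasDerivAt).congr_deriv (by ring)

/-- the constant-factor case of Remark 2: if `r` is C², `f` is a nonzero
constant, `x` is an integral curve of `r d/dx` and `r r'' + 2 r'² = 2 f r'` holds on ℝ,
then `r(x(t))² = (c / f) exp(2 f t) + c'` for some constants `c, c'`. -/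
theorem mixedKilling_solution_along_integral_curve_const (r x : ℝ → ℝ)
    (hr : ContDiff ℝ 2 r) (f : ℝ) (hf : f ≠ 0)
    (hx : Differentiable ℝ x) (hode : ∀ t, deriv x t = r (x t))
    (hmk : ∀ s, r s * deriv (deriv r) s + 2 * (deriv r s) ^ 2 = 2 * f * deriv r s) :
    ∃ c c' : ℝ, ∀ t, (r (x t)) ^ 2 = c / f * exp (2 * f * t) + c' := by
  have hxr : ∀ t, HasDerivAt x (r (x t)) t := fun t => hode t ▸ (hx t).hasDerivAt
  have hG : ∀ t, HasDerivAt (fun t => r (x t) ^ 2) (2 * (r (x t) ^ 2 * deriv r (x t))) t :=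
    fun t => (((hr.differentiable two_ne_zero (x t)).hasDerivAt.comp t (hxr t)).fun_pow 2)
      |>.congr_deriv (by rw [Function.comp_apply]; ring)
  have hG' : ∀ t, HasDerivAt (fun t => 2 * (r (x t) ^ 2 * deriv r (x t)))
      (2 * f * (2 * (r (x t) ^ 2 * deriv r (x t)))) t :=
    fun t => (((hasDerivAt_sq_mul_deriv hr (x t)).comp t (hxr t)).const_mul 2).congr_deriv
      (by linear_combination (2 * r (x t) ^ 2) * hmk (x t))
  refine ⟨r (x 0) ^ 2 * deriv r (x 0), r (x 0) ^ 2 - r (x 0) ^ 2 * deriv r (x 0) / f,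
    fun t => ?_⟩
  rw [eq_div_mul_exp_add_of_hasDerivAt (mul_ne_zero two_ne_zero hf) hG hG' t]
  field_simp
end
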